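/- For every a ∈ ℝ² in the interior of the first quadrant (a₁ > 0 and a₂ > 0) and every integer k ≥ 2, the set E¹_k(Σ₁, a) has at most k + 1 elements, where Σ₁ = {A₁, A₂}. -/

import Mathlib

open Matrix Set

noncomputable section

/-- `XSeq S a k` is the set of all vectors `T_{k-1} ⋯ T_0 · a` with each `T_j ∈ S`
(and `XSeq S a 0 = {a}`). -/
def XSeq {n : ℕ} (S : Set (Matrix (Fin n) (Fin n) ℝ)) (a : Fin n → ℝ) : ℕ → Set (Fin n → ℝ)
  | 0 => {a}
  | k + 1 => ⋃ A ∈ S, A.mulVec '' XSeq S a k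

/-- `PHull S a k` is the convex hull of `XSeq S a k`. -/
def PHull {n : ℕ} (S : Set (Matrix (Fin n) (Fin n) ℝ)) (a : Fin n → ℝ) (k : ℕ) :
    Set (Fin n → ℝ) :=
  convexHull ℝ (XSeq S a k)

/-- `EPts S a k` is the set of extreme points of `PHull S a k`. -/
def EPts {n : ℕ} (S : Set (Matrix (Fin n) (Fin n) ℝ)) (a : Fin n → ℝ) (k : ℕ) :
    Set (Fin n → ℝ) :=
  Set.extremePoints ℝ (PHull S a k)

/-- `NExt S a k` is the number of extreme points of `PHull S a k`. -/
def NExt {n : ℕ} (S : Set (Matrix (Fin n) (Fin n) ℝ)) (a : Fin n → ℝ) (k : ℕ) : ℕ :=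
  (EPts S a k).ncard

def M1 : Matrix (Fin 2) (Fin 2) ℝ := !![0, 1; 1, 0]
def M2 : Matrix (Fin 2) (Fin 2) ℝ := !![1, 1; 0, 1]
def M3 : Matrix (Fin 2) (Fin 2) ℝ := !![1, 0; 1, 1]
def M4 : Matrix (Fin 2) (Fin 2) ℝ := !![1, 1; 1, 0]
def M5 : Matrix (Fin 2) (Fin 2) ℝ := !![0, 1; 1, 1]

/-- Interior of the first quadrant. -/
def intQ1 : Set (Fin 2 → ℝ) := {c | 0 < c 0 ∧ 0 < c 1}
/-- Interior of the second quadrant. -/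
def intQ2 : Set (Fin 2 → ℝ) := {c | c 0 < 0 ∧ 0 < c 1}
/-- Interior of the third quadrant. -/
def intQ3 : Set (Fin 2 → ℝ) := {c | c 0 < 0 ∧ c 1 < 0}
/-- Interior of the fourth quadrant. -/
def intQ4 : Set (Fin 2 → ℝ) := {c | 0 < c 0 ∧ c 1 < 0}

/-- `EQuad S a k Q` is the set of extreme points of `PHull S a k` that maximize the linear
functional `x ↦ c ⬝ᵥ x` over `PHull S a k` for some `c ∈ Q`. -/
def EQuad (S : Set (Matrix (Fin 2) (Fin 2) ℝ)) (a : Fin 2 → ℝ) (k : ℕ)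
    (Q : Set (Fin 2 → ℝ)) : Set (Fin 2 → ℝ) :=
  {p ∈ EPts S a k | ∃ c ∈ Q, ∀ x ∈ PHull S a k, c ⬝ᵥ x ≤ c ⬝ᵥ p}

/-!
A point of `P_k` exposed by a direction `c` in the open first quadrant maximizes, over `X_k`, a
functional `x ↦ t x₀ + x₁` with slope `t = c₀ / c₁ > 0`. Writing such a maximizer of `X_{k+1}` as
`A₂ u` or `A₁ u`, the point `u` maximizes the slope `t / (t + 1) ∈ (0, 1)` resp. `1 / t > 1` over
`X_k` (in the second case `t < 1`, since otherwise `A₂ u` would beat `A₁ u`). Maximizers for a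
slope in `(0, 1)` and for a slope in `(1, ∞)` have at most one point in common, so the number of
positive-slope maximizers grows by at most one per step.
-/

def slopeMaximizers (X : Set (Fin 2 → ℝ)) (I : Set ℝ) : Set (Fin 2 → ℝ) :=
  {p ∈ X | ∃ t ∈ I, ∀ q ∈ X, t * q 0 + q 1 ≤ t * p 0 + p 1}

lemma slopeMaximizers_subset (X : Set (Fin 2 → ℝ)) (I : Set ℝ) : slopeMaximizers X I ⊆ X :=
  fun _ hp => hp.1

lemma slopeMaximizers_mono {X : Set (Fin 2 → ℝ)} {I J : Set ℝ} (h : I ⊆ J) :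
    slopeMaximizers X I ⊆ slopeMaximizers X J := by
  rintro p ⟨hp, t, ht, hmax⟩
  exact ⟨hp, t, h ht, hmax⟩

lemma slopeMaximizers_Ioo_inter_Ioi_subsingleton (X : Set (Fin 2 → ℝ)) :
    (slopeMaximizers X (Ioo 0 1) ∩ slopeMaximizers X (Ioi 1)).Subsingleton := by
  rintro p ⟨⟨hpX, t₁, ⟨-, ht₁⟩, hp₁⟩, -, t₂, ht₂, hp₂⟩
    q ⟨⟨hqX, s₁, ⟨-, hs₁⟩, hq₁⟩, -, s₂, hs₂, hq₂⟩
  have h₁ := hp₁ q hqX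
  have h₂ := hp₂ q hqX
  have h₃ := hq₁ p hpX
  have h₄ := hq₂ p hpX
  rw [mem_Ioi] at ht₂ hs₂
  have h0 : p 0 = q 0 := by
    apply le_antisymm
    · by_contra! h
      nlinarith [mul_lt_mul_of_pos_right (ht₁.trans hs₂) (sub_pos.2 h)]
    · by_contra! h
      nlinarith [mul_lt_mul_of_pos_right (hs₁.trans ht₂) (sub_pos.2 h)]
  have h1 : p 1 = q 1 := by rw [h0] at h₁ h₃; linarith
  ext i
  fin_cases i
  exacts [h0, h1]

lemma M1_mulVec (v : Fin 2 → ℝ) : M1 *ᵥ v = ![v 1, v 0] := by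
  ext i
  fin_cases i <;> simp [M1, mulVec, dotProduct, Fin.sum_univ_two]

lemma M2_mulVec (v : Fin 2 → ℝ) : M2 *ᵥ v = ![v 0 + v 1, v 1] := by
  ext i
  fin_cases i <;> simp [M2, mulVec, dotProduct, Fin.sum_univ_two]

lemma slopeMaximizers_image_subset {X : Set (Fin 2 → ℝ)} (hX : ∀ u ∈ X, 0 ≤ u 0 ∧ 0 < u 1) :
    slopeMaximizers (M1.mulVec '' X ∪ M2.mulVec '' X) (Ioi 0) ⊆
      M2.mulVec '' slopeMaximizers X (Ioo 0 1) ∪ M1.mulVec '' slopeMaximizers X (Ioi 1) := by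
  rintro p ⟨hp, t, ht, hmax⟩
  rw [mem_Ioi] at ht
  rcases hp with ⟨u, hu, rfl⟩ | ⟨u, hu, rfl⟩
  · obtain ⟨hu0, hu1⟩ := hX u hu
    have ht1 : t < 1 := by
      by_contra! h
      have := hmax _ (Or.inr (mem_image_of_mem _ hu))
      simp only [M1_mulVec, M2_mulVec, cons_val_zero, cons_val_one] at this
      nlinarith
    refine Or.inr ⟨u, ⟨hu, 1 / t, one_lt_one_div ht ht1, fun q hq => ?_⟩, rfl⟩
    have hq := hmax _ (Or.inl (mem_image_of_mem _ hq))
    simp only [M1_mulVec, cons_val_zero, cons_val_one] at hq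
    have hscale : ∀ v : Fin 2 → ℝ, 1 / t * v 0 + v 1 = (t * v 1 + v 0) / t := fun v => by
      field_simp
      ring
    rw [hscale, hscale]
    gcongr
  · refine Or.inl ⟨u, ⟨hu, t / (t + 1), ⟨by positivity, by rw [div_lt_one] <;> linarith⟩,
      fun q hq => ?_⟩, rfl⟩
    have hq := hmax _ (Or.inr (mem_image_of_mem _ hq))
    simp only [M2_mulVec, cons_val_zero, cons_val_one] at hq
    have hscale : ∀ v : Fin 2 → ℝ,
        t / (t + 1) * v 0 + v 1 = (t * (v 0 + v 1) + v 1) / (t + 1) := fun v => by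
        field_simp
        ring
    rw [hscale, hscale]
    gcongr

lemma ncard_slopeMaximizers_image_le {X : Set (Fin 2 → ℝ)} (hfin : X.Finite)
    (hX : ∀ u ∈ X, 0 ≤ u 0 ∧ 0 < u 1) :
    (slopeMaximizers (M1.mulVec '' X ∪ M2.mulVec '' X) (Ioi 0)).ncard ≤
      (slopeMaximizers X (Ioi 0)).ncard + 1 := by
  set A := slopeMaximizers X (Ioo 0 1)
  set B := slopeMaximizers X (Ioi 1)
  have hA : A.Finite := hfin.subset (slopeMaximizers_subset _ _)
  have hB : B.Finite := hfin.subset (slopeMaximizers_subset _ _)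
  have hAB : A ∪ B ⊆ slopeMaximizers X (Ioi 0) :=
    union_subset (slopeMaximizers_mono Ioo_subset_Ioi_self)
      (slopeMaximizers_mono (Ioi_subset_Ioi zero_le_one))
  calc _ ≤ (M2.mulVec '' A ∪ M1.mulVec '' B).ncard :=
        ncard_le_ncard (slopeMaximizers_image_subset hX) ((hA.image _).union (hB.image _))
    _ ≤ A.ncard + B.ncard :=
        (ncard_union_le _ _).trans (add_le_add (ncard_image_le hA) (ncard_image_le hB))
    _ = (A ∪ B).ncard + (A ∩ B).ncard := (ncard_union_add_ncard_inter A B hA hB).symm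
    _ ≤ (slopeMaximizers X (Ioi 0)).ncard + 1 :=
        add_le_add (ncard_le_ncard hAB (hfin.subset (slopeMaximizers_subset _ _)))
          ((ncard_le_one (hA.inter_of_left B)).2 fun _ hx _ hy =>
            slopeMaximizers_Ioo_inter_Ioi_subsingleton X hx hy)

lemma XSeq_pair_succ {n : ℕ} (A B : Matrix (Fin n) (Fin n) ℝ) (a : Fin n → ℝ) (k : ℕ) :
    XSeq {A, B} a (k + 1) = A.mulVec '' XSeq {A, B} a k ∪ B.mulVec '' XSeq {A, B} a k := by
  simp [XSeq]

lemma XSeq_finite {n : ℕ} {S : Set (Matrix (Fin n) (Fin n) ℝ)} (hS : S.Finite)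
    (a : Fin n → ℝ) (k : ℕ) : (XSeq S a k).Finite := by
  induction k with
  | zero => exact finite_singleton a
  | succ k ih => exact hS.biUnion fun A _ => ih.image _

lemma XSeq_M1_M2_pos {a : Fin 2 → ℝ} (ha : 0 < a 0 ∧ 0 < a 1) (k : ℕ) :
    ∀ u ∈ XSeq {M1, M2} a k, 0 < u 0 ∧ 0 < u 1 := by
  induction k with
  | zero =>
    rintro u rfl
    exact ha
  | succ k ih =>
    rw [XSeq_pair_succ]
    rintro _ (⟨u, hu, rfl⟩ | ⟨u, hu, rfl⟩) <;> obtain ⟨hu0, hu1⟩ := ih u hu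
    · simpa only [M1_mulVec] using ⟨hu1, hu0⟩
    · simpa only [M2_mulVec] using ⟨add_pos hu0 hu1, hu1⟩

lemma ncard_slopeMaximizers_XSeq_M1_M2_le {a : Fin 2 → ℝ} (ha : 0 < a 0 ∧ 0 < a 1) (k : ℕ) :
    (slopeMaximizers (XSeq {M1, M2} a k) (Ioi 0)).ncard ≤ k + 1 := by
  induction k with
  | zero =>
    calc _ ≤ ({a} : Set (Fin 2 → ℝ)).ncard :=
          ncard_le_ncard (slopeMaximizers_subset _ _) (finite_singleton a)
      _ = 0 + 1 := ncard_singleton a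
  | succ k ih =>
    rw [XSeq_pair_succ]
    refine (ncard_slopeMaximizers_image_le (XSeq_finite (toFinite _) a k) ?_).trans (by omega)
    exact fun u hu => ⟨(XSeq_M1_M2_pos ha k u hu).1.le, (XSeq_M1_M2_pos ha k u hu).2⟩

lemma EQuad_intQ1_subset_slopeMaximizers (S : Set (Matrix (Fin 2) (Fin 2) ℝ))
    (a : Fin 2 → ℝ) (k : ℕ) :
    EQuad S a k intQ1 ⊆ slopeMaximizers (XSeq S a k) (Ioi 0) := by
  rintro p ⟨hpE, c, ⟨hc0, hc1⟩, hmax⟩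
  refine ⟨extremePoints_convexHull_subset hpE, c 0 / c 1, div_pos hc0 hc1, fun q hq => ?_⟩
  have hcq := hmax q (subset_convexHull ℝ _ hq)
  simp only [dotProduct, Fin.sum_univ_two] at hcq
  have hscale : ∀ v : Fin 2 → ℝ, c 0 / c 1 * v 0 + v 1 = (c 0 * v 0 + c 1 * v 1) / c 1 :=
    fun v => by field_simp
  rw [hscale, hscale]
  gcongr

theorem stmt10_general (a : Fin 2 → ℝ) (ha : 0 < a 0 ∧ 0 < a 1) (k : ℕ) :
    (EQuad {M1, M2} a k intQ1).ncard ≤ k + 1 :=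
  calc _ ≤ (slopeMaximizers (XSeq {M1, M2} a k) (Ioi 0)).ncard :=
        ncard_le_ncard (EQuad_intQ1_subset_slopeMaximizers _ a k)
          ((XSeq_finite (toFinite _) a k).subset (slopeMaximizers_subset _ _))
    _ ≤ k + 1 := ncard_slopeMaximizers_XSeq_M1_M2_le ha k

/-- For `a` in the interior of the first quadrant and `k ≥ 2`,
`|E¹_k(Σ₁, a)| ≤ k + 1`. -/
theorem stmt10 (a : Fin 2 → ℝ) (ha : 0 < a 0 ∧ 0 < a 1) (k : ℕ) (hk : 2 ≤ k) :
    (EQuad {M1, M2} a k intQ1).ncard ≤ k + 1 :=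
  stmt10_general a ha k

end
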